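/- arXiv:cond-mat/0107118 — 4 statements merged into one kernel-verified Lean document; each statement's English description precedes it below -/
import Mathlib

section
/- Let M ≥ 1 be real, let i ≥ 1 be an integer, and let s_+, s_− be integers with 0 ≤ s_+ ≤ i and 0 ≤ s_− ≤ i. Suppose there exist real numbers k0, k_+, k_− such that u_i(k0² + 4 cos²(π k_+/2) cos²(π k_−/2)) · v_{s_+}(cos²(π k_+/2)) · v_{s_−}(cos²(π k_−/2)) ≠ 0. Then s_+ + s_− ≥ i − 2. (Hence the depth l = s_+ + s_− − i + 2 of any nonempty sector is nonnegative.) -/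
/-- The `i`-th slice cutoff of the renormalization group:
`uᵢ(r) = u(M^{2(i-1)} r) - u(M^{2i} r)`. -/
noncomputable def sliceCut (u : ℝ → ℝ) (M : ℝ) (i : ℕ) (r : ℝ) : ℝ :=
  u (M ^ (2 * (i - 1)) * r) - u (M ^ (2 * i) * r)

/-- The sector cutoffs of slice `i`. -/
noncomputable def vCut (u : ℝ → ℝ) (M : ℝ) (i s : ℕ) (r : ℝ) : ℝ :=
  if s = 0 then 1 - u (M ^ 2 * r)
  else if s = i then u (M ^ (2 * i) * r)
  else u (M ^ (2 * s) * r) - u (M ^ (2 * s + 2) * r)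

lemma sliceCut_bound (u : ℝ → ℝ) (M : ℝ) (hM : 1 ≤ M)
    (hu0 : ∀ r : ℝ, 2 < |r| → u r = 0) (i : ℕ) (r : ℝ) (hr : 0 ≤ r)
    (h : sliceCut u M i r ≠ 0) : M ^ (2 * (i - 1)) * r ≤ 2 := by
  by_contra hlt
  push_neg at hlt
  have hM0 : (0:ℝ) < M := lt_of_lt_of_le one_pos hM
  have e1 : u (M ^ (2 * (i - 1)) * r) = 0 := by
    apply hu0
    rw [abs_of_nonneg (by positivity)]
    exact hlt
  have hle : M ^ (2 * (i - 1)) ≤ M ^ (2 * i) := pow_le_pow_right₀ hM (by omega)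
  have e2 : u (M ^ (2 * i) * r) = 0 := by
    apply hu0
    rw [abs_of_nonneg (by positivity)]
    exact lt_of_lt_of_le hlt (mul_le_mul_of_nonneg_right hle hr)
  simp [sliceCut, e1, e2] at h

lemma vCut_bound (u : ℝ → ℝ) (M : ℝ) (hM : 1 ≤ M)
    (hu1 : ∀ r : ℝ, |r| < 1 → u r = 1) (i s : ℕ) (hs : s < i) (c : ℝ) (hc : 0 ≤ c)
    (h : vCut u M i s c ≠ 0) : 1 ≤ M ^ (2 * s + 2) * c := by
  by_contra hlt
  push_neg at hlt
  have hM0 : (0:ℝ) < M := lt_of_lt_of_le one_pos hM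
  have key : ∀ n : ℕ, n ≤ 2 * s + 2 → u (M ^ n * c) = 1 := by
    intro n hn
    apply hu1
    rw [abs_of_nonneg (by positivity)]
    exact lt_of_le_of_lt (mul_le_mul_of_nonneg_right (pow_le_pow_right₀ hM hn) hc) hlt
  rcases Nat.eq_zero_or_pos s with h0 | h0
  · subst h0
    rw [vCut, if_pos rfl, key 2 (by omega)] at h
    simp at h
  · rw [vCut, if_neg (by omega), if_neg (by omega),
      key (2 * s) (by omega), key (2 * s + 2) (by omega)] at h
    simp at h

/-- If the sector `σ = (s₊, s₋)` of slice `i` is nonempty, i.e. the product of the slice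
cutoff and the two sector cutoffs is somewhere nonzero, then `s₊ + s₋ ≥ i - 2`:
the depth `l = s₊ + s₋ - i + 2` of any nonempty sector is nonnegative. -/
theorem sector_depth_nonneg (M : ℝ) (hM : 1 ≤ M) (u : ℝ → ℝ)
    (hu1 : ∀ r : ℝ, |r| < 1 → u r = 1) (hu0 : ∀ r : ℝ, 2 < |r| → u r = 0)
    (i : ℕ) (hi : 1 ≤ i) (sp sm : ℕ) (hsp : sp ≤ i) (hsm : sm ≤ i)
    (hne : ∃ k0 kp km : ℝ,
      sliceCut u M i (k0 ^ 2 +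
          4 * Real.cos (Real.pi * kp / 2) ^ 2 * Real.cos (Real.pi * km / 2) ^ 2) *
        vCut u M i sp (Real.cos (Real.pi * kp / 2) ^ 2) *
        vCut u M i sm (Real.cos (Real.pi * km / 2) ^ 2) ≠ 0) :
    i ≤ sp + sm + 2 := by
  by_contra hcon
  push_neg at hcon
  obtain ⟨k0, kp, km, hne⟩ := hne
  set cp : ℝ := Real.cos (Real.pi * kp / 2) ^ 2 with hcp
  set cm : ℝ := Real.cos (Real.pi * km / 2) ^ 2 with hcm
  have hcp0 : 0 ≤ cp := sq_nonneg _
  have hcm0 : 0 ≤ cm := sq_nonneg _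
  have hM0 : (0:ℝ) < M := lt_of_lt_of_le one_pos hM
  have h1 : sliceCut u M i (k0 ^ 2 + 4 * cp * cm) ≠ 0 :=
    left_ne_zero_of_mul (left_ne_zero_of_mul hne)
  have h2 : vCut u M i sp cp ≠ 0 := right_ne_zero_of_mul (left_ne_zero_of_mul hne)
  have h3 : vCut u M i sm cm ≠ 0 := right_ne_zero_of_mul hne
  have hA : M ^ (2 * (i - 1)) * (k0 ^ 2 + 4 * cp * cm) ≤ 2 :=
    sliceCut_bound u M hM hu0 i _ (by positivity) h1
  have hBp : 1 ≤ M ^ (2 * sp + 2) * cp := vCut_bound u M hM hu1 i sp (by omega) cp hcp0 h2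
  have hBm : 1 ≤ M ^ (2 * sm + 2) * cm := vCut_bound u M hM hu1 i sm (by omega) cm hcm0 h3
  have hpow : M ^ (2 * sp + 2 + (2 * sm + 2)) ≤ M ^ (2 * (i - 1)) :=
    pow_le_pow_right₀ hM (by omega)
  have hmul : M ^ (2 * sp + 2) * M ^ (2 * sm + 2) = M ^ (2 * sp + 2 + (2 * sm + 2)) :=
    (pow_add M _ _).symm
  have hk : (0:ℝ) ≤ k0 ^ 2 := sq_nonneg _
  have hpos : (0:ℝ) < M ^ (2 * (i - 1)) := by positivity
  nlinarith [mul_le_mul_of_nonneg_right hpow (mul_nonneg hcp0 hcm0),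
    mul_le_mul hBp hBm (by norm_num) (by positivity),
    mul_le_mul_of_nonneg_left hk (le_of_lt hpos)]
end

section
/- Let M > 1 be real, let s_1 ≤ s_2 ≤ s_3 ≤ s_4 be nonnegative integers, and let q_1, q_2, q_3, q_4 be real numbers with q_1 + q_2 + q_3 + q_4 = 0, with (2/(π M)) · M^{−s_1} ≤ |q_1|, and with |q_j| ≤ √2 · M^{−s_j} for j = 2, 3, 4. Then 3√2 · M^{−s_2} ≥ (2/(π M)) · M^{−s_1}, hence s_2 ≤ s_1 + 1 + log(3π/√2)/log M. In particular, if M > 3π/√2 then s_2 − s_1 ≤ 1, i.e. the two smallest sector indices differ by at most one unit. -/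
/-- If `m = 0` in the conservation rule `q₁ + q₂ + q₃ + q₄ = 0`, with the sector support
bounds `(2/(πM)) M^{-s₁} ≤ |q₁|` and `|q_j| ≤ √2 M^{-s_j}` for `j = 2,3,4` and
`s₁ ≤ s₂ ≤ s₃ ≤ s₄`, then `3√2 M^{-s₂} ≥ (2/(πM)) M^{-s₁}`, hence
`s₂ ≤ s₁ + 1 + log(3π/√2)/log M`; in particular `s₂ ≤ s₁ + 1` when `M > 3π/√2`. -/
theorem two_smallest_sector_indices (M : ℝ) (hM : 1 < M)
    (s1 s2 s3 s4 : ℕ) (h12 : s1 ≤ s2) (h23 : s2 ≤ s3) (h34 : s3 ≤ s4)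
    (q1 q2 q3 q4 : ℝ) (hsum : q1 + q2 + q3 + q4 = 0)
    (h1 : 2 / (Real.pi * M) * (M ^ s1)⁻¹ ≤ |q1|)
    (h2 : |q2| ≤ Real.sqrt 2 * (M ^ s2)⁻¹)
    (h3 : |q3| ≤ Real.sqrt 2 * (M ^ s3)⁻¹)
    (h4 : |q4| ≤ Real.sqrt 2 * (M ^ s4)⁻¹) :
    2 / (Real.pi * M) * (M ^ s1)⁻¹ ≤ 3 * Real.sqrt 2 * (M ^ s2)⁻¹ ∧
    (s2 : ℝ) ≤ s1 + 1 + Real.log (3 * Real.pi / Real.sqrt 2) / Real.log M ∧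
    (3 * Real.pi / Real.sqrt 2 < M → s2 ≤ s1 + 1) := by
  have hM0 : (0:ℝ) < M := lt_trans one_pos hM
  have hpi := Real.pi_pos
  have hs2pos : (0:ℝ) < Real.sqrt 2 := Real.sqrt_pos.2 (by norm_num)
  have h2sq : Real.sqrt 2 * Real.sqrt 2 = 2 := Real.mul_self_sqrt (by norm_num)
  have hp1 : (0:ℝ) < M ^ s1 := pow_pos hM0 _
  have hp2 : (0:ℝ) < M ^ s2 := pow_pos hM0 _
  have hp3 : (0:ℝ) < M ^ s3 := pow_pos hM0 _
  have hp4 : (0:ℝ) < M ^ s4 := pow_pos hM0 _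
  have hinv3 : (M ^ s3)⁻¹ ≤ (M ^ s2)⁻¹ :=
    inv_anti₀ hp2 (pow_le_pow_right₀ hM.le h23)
  have hinv4 : (M ^ s4)⁻¹ ≤ (M ^ s2)⁻¹ :=
    inv_anti₀ hp2 (pow_le_pow_right₀ hM.le (h23.trans h34))
  have habs : |q1| ≤ 3 * Real.sqrt 2 * (M ^ s2)⁻¹ := by
    have : q1 = -(q2 + q3 + q4) := by linarith
    rw [this, abs_neg]
    calc |q2 + q3 + q4| ≤ |q2| + |q3| + |q4| := abs_add_three _ _ _
      _ ≤ Real.sqrt 2 * (M ^ s2)⁻¹ + Real.sqrt 2 * (M ^ s3)⁻¹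
            + Real.sqrt 2 * (M ^ s4)⁻¹ := by gcongr
      _ ≤ 3 * Real.sqrt 2 * (M ^ s2)⁻¹ := by nlinarith
  have part1 : 2 / (Real.pi * M) * (M ^ s1)⁻¹ ≤ 3 * Real.sqrt 2 * (M ^ s2)⁻¹ :=
    h1.trans habs
  have hcpos : (0:ℝ) < 3 * Real.pi / Real.sqrt 2 := by positivity
  have key : M ^ s2 ≤ 3 * Real.pi / Real.sqrt 2 * M ^ (s1 + 1) := by
    rw [pow_succ]
    have part1' := part1
    field_simp at part1'
    rw [div_mul_eq_mul_div, le_div_iff₀ hs2pos]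
    nlinarith [part1', mul_le_mul_of_nonneg_left part1' hs2pos.le]
  have hL : (0:ℝ) < Real.log M := Real.log_pos hM
  have hlog : (s2:ℝ) * Real.log M ≤
      Real.log (3 * Real.pi / Real.sqrt 2) + ((s1:ℝ) + 1) * Real.log M := by
    have := Real.log_le_log hp2 key
    rw [Real.log_mul (ne_of_gt hcpos) (ne_of_gt (pow_pos hM0 _)),
      Real.log_pow, Real.log_pow] at this
    push_cast at this ⊢
    linarith
  set c := Real.log (3 * Real.pi / Real.sqrt 2) with hc
  have part2 : (s2:ℝ) ≤ s1 + 1 + c / Real.log M := by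
    have hcm : c / Real.log M * Real.log M = c := div_mul_cancel₀ _ (ne_of_gt hL)
    have : (s2:ℝ) * Real.log M ≤ ((s1:ℝ) + 1 + c / Real.log M) * Real.log M := by
      nlinarith
    exact le_of_mul_le_mul_right this hL
  refine ⟨part1, part2, fun hMbig => ?_⟩
  have hclt : c < Real.log M := Real.log_lt_log hcpos hMbig
  have : (s2:ℝ) < (s1:ℝ) + 2 := by
    have hdiv : c / Real.log M < 1 := (div_lt_one hL).2 hclt
    linarith
  have := (by exact_mod_cast this : s2 < s1 + 2)
  omega
end

section
/- (Single-slice momentum conservation.) Let M > 3π/√2 be real and i ≥ 1 an integer. For j = 1, 2, 3, 4, let s_j be an integer with 0 ≤ s_j ≤ i and let q_j be a real number in the support of sector index s_j at scale i, meaning: 2/(π M) ≤ |q_j| ≤ 1 if s_j = 0; (2/(π M)) M^{−s_j} ≤ |q_j| ≤ √2 M^{−s_j} if 1 ≤ s_j ≤ i−1; and |q_j| ≤ √2 M^{−i} if s_j = i. If q_1 + q_2 + q_3 + q_4 = 2m for some integer m, then the two smallest values among s_1, s_2, s_3, s_4 differ by at most one unit; that is, writing the non-decreasing rearrangement s_(1)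 ≤ s_(2) ≤ s_(3) ≤ s_(4), one has s_(2) ≤ s_(1) + 1. -/
set_option maxHeartbeats 1000000


lemma sector_aux (M : ℝ) (hM : 3 * Real.pi / Real.sqrt 2 < M) (t : ℕ)
    (a b c d : ℝ)
    (hlb : 2 / (Real.pi * M) * (M ^ t)⁻¹ ≤ |a|) (hub1 : |a| ≤ 1)
    (hb : |b| ≤ Real.sqrt 2 * (M ^ (t+2))⁻¹)
    (hc : |c| ≤ Real.sqrt 2 * (M ^ (t+2))⁻¹)
    (hd : |d| ≤ Real.sqrt 2 * (M ^ (t+2))⁻¹)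
    (m : ℤ) (hsum : a + b + c + d = 2 * m) : False := by
  have hs2 : Real.sqrt 2 ^ 2 = 2 := Real.sq_sqrt (by norm_num)
  have hs2pos : 0 < Real.sqrt 2 := Real.sqrt_pos.mpr (by norm_num)
  have hs2lt : Real.sqrt 2 < 1.5 := by nlinarith
  have hpi : 3 < Real.pi := Real.pi_gt_three
  have h1 : 3 * Real.pi < M * Real.sqrt 2 := by
    rw [div_lt_iff₀ hs2pos] at hM; exact hM
  have hM6 : 6 < M := by nlinarith
  have hMpos : 0 < M := by linarith
  have hMt : (1:ℝ) ≤ M ^ t := one_le_pow₀ (by linarith)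
  have hPpos : (0:ℝ) < (M ^ t)⁻¹ := by positivity
  have hPle : ((M:ℝ) ^ t)⁻¹ ≤ 1 := by
    rw [inv_le_one_iff₀]; right; exact hMt
  have hM2 : (36:ℝ) ≤ M ^ 2 := by nlinarith
  have hM2inv : ((M:ℝ) ^ 2)⁻¹ ≤ 1/36 := by
    rw [inv_le_comm₀ (by positivity) (by norm_num)]
    linarith
  have hM2invpos : (0:ℝ) < (M ^ 2)⁻¹ := by positivity
  have hsplit : ((M:ℝ) ^ (t+2))⁻¹ = (M ^ t)⁻¹ * (M ^ 2)⁻¹ := by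
    rw [pow_add, mul_inv]
  have hsm : Real.sqrt 2 * (M ^ (t+2))⁻¹ ≤ 1/6 := by
    rw [hsplit]
    nlinarith [mul_pos hPpos hM2invpos]
  have htri : |a + b + c + d| ≤ |a| + |b| + |c| + |d| := by
    have t1 := abs_add_le (a+b+c) d
    have t2 := abs_add_le (a+b) c
    have t3 := abs_add_le a b
    linarith
  -- m = 0
  have hm0 : m = 0 := by
    have habs : |2 * (m:ℝ)| ≤ 1.5 := by
      rw [← hsum]
      have := hb.trans hsm
      have := hc.trans hsm
      have := hd.trans hsm
      linarith
    rw [abs_mul] at habs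
    have h2 : |(m:ℝ)| < 1 := by
      rw [abs_two] at habs; linarith
    have h3 : |m| < 1 := by exact_mod_cast h2
    have := abs_lt.mp h3
    omega
  rw [hm0] at hsum
  push_cast at hsum
  have ha : a = -(b + c + d) := by linarith
  have hfin : |a| ≤ 3 * Real.sqrt 2 * ((M ^ t)⁻¹ * (M ^ 2)⁻¹) := by
    rw [ha, abs_neg, ← hsplit]
    have t1 := abs_add_le (b+c) d
    have t2 := abs_add_le b c
    linarith
  have hkey : 2 / (Real.pi * M) ≤ 3 * Real.sqrt 2 * (M ^ 2)⁻¹ := by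
    apply le_of_mul_le_mul_right _ hPpos
    have h := hlb.trans hfin
    have heq : 3 * Real.sqrt 2 * ((M ^ t)⁻¹ * (M ^ 2)⁻¹)
        = 3 * Real.sqrt 2 * (M ^ 2)⁻¹ * (M ^ t)⁻¹ := by ring
    linarith
  have hpiM : (0:ℝ) < Real.pi * M := by positivity
  rw [div_le_iff₀ hpiM] at hkey
  -- hkey : 2 ≤ 3 * √2 * (M^2)⁻¹ * (π * M)
  have hMne : (M:ℝ) ≠ 0 := ne_of_gt hMpos
  have h3 : 2 * M ^ 2 ≤ 3 * Real.sqrt 2 * (Real.pi * M) := by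
    have := mul_le_mul_of_nonneg_right hkey (le_of_lt (by positivity : (0:ℝ) < M ^ 2))
    calc 2 * M ^ 2 ≤ 3 * Real.sqrt 2 * (M ^ 2)⁻¹ * (Real.pi * M) * M ^ 2 := by linarith
      _ = 3 * Real.sqrt 2 * (Real.pi * M) := by field_simp
  have h4 : 3 * Real.pi * Real.sqrt 2 < M * 2 := by
    nlinarith [mul_lt_mul_of_pos_right h1 hs2pos]
  nlinarith [h3, h4, hMpos]




/-- `q` is in the support of sector index `s` (with `0 ≤ s ≤ i`) at scale `i`:
`2/(πM) ≤ |q| ≤ 1` when `s = 0`; `(2/(πM)) M^{-s} ≤ |q| ≤ √2 M^{-s}` when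
`1 ≤ s ≤ i-1`; and `|q| ≤ √2 M^{-i}` when `s = i`. -/
def InSectorSupport (M : ℝ) (i s : ℕ) (q : ℝ) : Prop :=
  if s = 0 then 2 / (Real.pi * M) ≤ |q| ∧ |q| ≤ 1
  else if s = i then |q| ≤ Real.sqrt 2 * (M ^ i)⁻¹
  else 2 / (Real.pi * M) * (M ^ s)⁻¹ ≤ |q| ∧ |q| ≤ Real.sqrt 2 * (M ^ s)⁻¹

/-- Single-slice momentum conservation: if four fields of slice `i` carry sector indices
`s_j` and fractional momenta `q_j` in the corresponding sector supports, and
`q₁ + q₂ + q₃ + q₄` is an even integer, then the two smallest of the `s_j` differ by at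
most one unit: at least two indices `j ≠ k` have `s_j, s_k ≤ min + 1`. -/
theorem single_slice_momentum_conservation (M : ℝ) (hM : 3 * Real.pi / Real.sqrt 2 < M)
    (i : ℕ) (hi : 1 ≤ i) (s : Fin 4 → ℕ) (hs : ∀ j, s j ≤ i)
    (q : Fin 4 → ℝ) (hsupp : ∀ j, InSectorSupport M i (s j) (q j))
    (m : ℤ) (hsum : q 0 + q 1 + q 2 + q 3 = 2 * m) :
    ∃ j k : Fin 4, j ≠ k ∧
      s j ≤ Finset.univ.inf' Finset.univ_nonempty s + 1 ∧
      s k ≤ Finset.univ.inf' Finset.univ_nonempty s + 1 := by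
  by_contra hcon
  push_neg at hcon
  set t := Finset.univ.inf' Finset.univ_nonempty s with ht
  obtain ⟨j0, -, hj0⟩ := Finset.exists_mem_eq_inf' Finset.univ_nonempty s
  rw [← ht] at hj0
  -- basic facts about M
  have hs2pos : 0 < Real.sqrt 2 := Real.sqrt_pos.mpr (by norm_num)
  have hs2 : Real.sqrt 2 ^ 2 = 2 := Real.sq_sqrt (by norm_num)
  have hs2lt : Real.sqrt 2 < 1.5 := by nlinarith
  have hpi : 3 < Real.pi := Real.pi_gt_three
  have h1 : 3 * Real.pi < M * Real.sqrt 2 := by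
    rw [div_lt_iff₀ hs2pos] at hM; exact hM
  have hM6 : 6 < M := by nlinarith
  have hM1 : (1:ℝ) ≤ M := by linarith
  -- every other index has sector ≥ t+2
  have hk : ∀ k, k ≠ j0 → t + 2 ≤ s k := by
    intro k hkj
    have h := hcon j0 k hkj.symm (by omega)
    omega
  -- there is an index ≠ j0, so t + 2 ≤ i
  have hone : (1 : Fin 4) ≠ 0 := by decide
  have hne1 : j0 + 1 ≠ j0 := by
    intro hh
    rw [add_comm] at hh
    exact hone (add_eq_right.mp hh)
  have hti : t + 2 ≤ i := le_trans (hk _ hne1) (hs _)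
  -- uniform upper bound for nonzero sectors
  have hub1 : ∀ k, s k ≠ 0 → |q k| ≤ Real.sqrt 2 * (M ^ (s k))⁻¹ := by
    intro k hk0
    have h := hsupp k
    unfold InSectorSupport at h
    rw [if_neg hk0] at h
    by_cases hki : s k = i
    · rw [if_pos hki] at h; rw [hki]; exact h
    · rw [if_neg hki] at h; exact h.2
  -- upper bound for the three large sectors
  have hub : ∀ k, k ≠ j0 → |q k| ≤ Real.sqrt 2 * (M ^ (t+2))⁻¹ := by
    intro k hkj
    have h2 := hk k hkj
    have h := hub1 k (by omega)
    have hpow : (M:ℝ) ^ (t+2) ≤ M ^ (s k) := pow_le_pow_right₀ hM1 h2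
    have : ((M:ℝ) ^ (s k))⁻¹ ≤ (M ^ (t+2))⁻¹ := by
      apply inv_anti₀ (by positivity) hpow
    calc |q k| ≤ Real.sqrt 2 * (M ^ (s k))⁻¹ := h
      _ ≤ Real.sqrt 2 * (M ^ (t+2))⁻¹ := by
          apply mul_le_mul_of_nonneg_left this (le_of_lt hs2pos)
  -- lower and upper bounds for q j0
  have htne : t ≠ i := by omega
  have hlb : 2 / (Real.pi * M) * (M ^ t)⁻¹ ≤ |q j0| := by
    have h := hsupp j0
    unfold InSectorSupport at h
    rw [← hj0] at h
    by_cases ht0 : t = 0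
    · rw [if_pos ht0] at h
      rw [ht0]
      simpa using h.1
    · rw [if_neg ht0, if_neg htne] at h
      exact h.1
  have hq0ub : |q j0| ≤ 1 := by
    have h := hsupp j0
    unfold InSectorSupport at h
    rw [← hj0] at h
    by_cases ht0 : t = 0
    · rw [if_pos ht0] at h; exact h.2
    · rw [if_neg ht0, if_neg htne] at h
      have hMt : (M:ℝ) ≤ M ^ t := by
        calc (M:ℝ) = M ^ 1 := (pow_one M).symm
          _ ≤ M ^ t := pow_le_pow_right₀ hM1 (by omega)
      have hinv : ((M:ℝ) ^ t)⁻¹ ≤ M⁻¹ := inv_anti₀ (by linarith) hMt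
      have hMi : (M:ℝ)⁻¹ ≤ 6⁻¹ := inv_anti₀ (by norm_num) (le_of_lt hM6)
      calc |q j0| ≤ Real.sqrt 2 * (M ^ t)⁻¹ := h.2
        _ ≤ 1.5 * 6⁻¹ := by
            apply mul_le_mul (le_of_lt hs2lt) (hinv.trans hMi) (by positivity) (by norm_num)
        _ ≤ 1 := by norm_num
  -- apply the aux lemma, case by the position of j0
  fin_cases j0
  · exact sector_aux M hM t (q 0) (q 1) (q 2) (q 3) hlb hq0ub
      (hub 1 (by decide)) (hub 2 (by decide)) (hub 3 (by decide)) m (by linarith)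
  · exact sector_aux M hM t (q 1) (q 0) (q 2) (q 3) hlb hq0ub
      (hub 0 (by decide)) (hub 2 (by decide)) (hub 3 (by decide)) m (by linarith)
  · exact sector_aux M hM t (q 2) (q 0) (q 1) (q 3) hlb hq0ub
      (hub 0 (by decide)) (hub 1 (by decide)) (hub 3 (by decide)) m (by linarith)
  · exact sector_aux M hM t (q 3) (q 0) (q 1) (q 2) hlb hq0ub
      (hub 0 (by decide)) (hub 1 (by decide)) (hub 2 (by decide)) m (by linarith)
end

section
/- (Multislice momentum conservation.) Let M > 3π/√2 be real. For j = 1, 2, 3, 4, let i_j ≥ 1 be integers, let s_j be integers with 0 ≤ s_j ≤ i_j, and let q_j be real numbers in the support of sector index s_j at scale i_j, meaning: 2/(π M) ≤ |q_j| ≤ 1 if s_j = 0; (2/(π M)) M^{−s_j} ≤ |q_j| ≤ √2 M^{−s_j} if 1 ≤ s_j ≤ i_j − 1; and |q_j| ≤ √2 M^{−i_j} if s_j = i_j. Suppose q_1 + q_2 + q_3 + q_4 = 2m for some integer m. Then either the two smallest values among s_1, s_2, s_3, s_4 differ by at most one unit (s_(2) ≤ s_(1) + 1 for the non-decreasing rearrangement),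 or the minimum is attained at a unique index j0 which satisfies s_{j0} = i_{j0} and i_{j0} < i_k for all k ≠ j0. -/
lemma msc_M_big (M : ℝ) (hM : 3 * Real.pi / Real.sqrt 2 < M) : 6 < M := by
  have h2 : (0:ℝ) < Real.sqrt 2 := by positivity
  have h2' : Real.sqrt 2 < 3/2 := by
    nlinarith [Real.sq_sqrt (by norm_num : (2:ℝ) ≥ 0), Real.sqrt_nonneg 2]
  have hpi := Real.pi_gt_three
  rw [div_lt_iff₀ h2] at hM
  nlinarith

lemma msc_upper (M : ℝ) (hM : 1 ≤ M) {i s : ℕ} {q : ℝ}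
    (h : InSectorSupport M i s q) : |q| ≤ Real.sqrt 2 * (M ^ s)⁻¹ := by
  unfold InSectorSupport at h
  split_ifs at h with h0 hsi
  · subst h0
    simp only [pow_zero, inv_one, mul_one]
    calc |q| ≤ 1 := h.2
      _ ≤ Real.sqrt 2 := by
        nlinarith [Real.sq_sqrt (by norm_num : (2:ℝ) ≥ 0), Real.sqrt_nonneg 2]
  · subst hsi; exact h
  · exact h.2

lemma msc_lower (M : ℝ) {i s : ℕ} {q : ℝ} (hsi : s < i)
    (h : InSectorSupport M i s q) : 2 / (Real.pi * M) * (M ^ s)⁻¹ ≤ |q| := by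
  unfold InSectorSupport at h
  split_ifs at h with h0 hsi'
  · subst h0; simpa using h.1
  · omega
  · exact h.1

lemma msc_key (M : ℝ) (hM : 3 * Real.pi / Real.sqrt 2 < M) (σ : ℕ)
    (a b c d : ℝ)
    (hal : 2 / (Real.pi * M) * (M ^ σ)⁻¹ ≤ |a|) (hau : |a| ≤ Real.sqrt 2)
    (hb : |b| ≤ Real.sqrt 2 * (M ^ (σ + 2))⁻¹)
    (hc : |c| ≤ Real.sqrt 2 * (M ^ (σ + 2))⁻¹)
    (hd : |d| ≤ Real.sqrt 2 * (M ^ (σ + 2))⁻¹)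
    (m : ℤ) (h : a + b + c + d = 2 * m) : False := by
  have hM6 := msc_M_big M hM
  have hM0 : (0:ℝ) < M := by linarith
  have hP : (0:ℝ) < M ^ σ := by positivity
  have hP1 : (1:ℝ) ≤ M ^ σ := one_le_pow₀ (by linarith)
  have hs2 : Real.sqrt 2 < 3/2 := by
    nlinarith [Real.sq_sqrt (by norm_num : (2:ℝ) ≥ 0), Real.sqrt_nonneg 2]
  have hs2' : (0:ℝ) < Real.sqrt 2 := by positivity
  have hpow : (M ^ (σ + 2))⁻¹ = (M ^ σ)⁻¹ * (M ^ 2)⁻¹ := by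
    rw [pow_add, mul_inv]
  have hinv1 : (M ^ σ)⁻¹ ≤ 1 := by
    rw [inv_le_one_iff₀]; right; exact hP1
  have hinv2 : (M ^ 2)⁻¹ ≤ 1/36 := by
    rw [inv_le_iff_one_le_mul₀ (by positivity)]
    nlinarith
  have hsmall : Real.sqrt 2 * (M ^ (σ + 2))⁻¹ ≤ (3/2) * (1/36) := by
    rw [hpow]
    have hxy : (M ^ σ)⁻¹ * (M ^ 2)⁻¹ ≤ 1/36 := by
      calc (M ^ σ)⁻¹ * (M ^ 2)⁻¹ ≤ 1 * (M ^ 2)⁻¹ :=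
            mul_le_mul_of_nonneg_right hinv1 (by positivity)
        _ ≤ 1/36 := by linarith
    exact mul_le_mul hs2.le hxy (by positivity) (by norm_num)
  -- m = 0
  have hm : m = 0 := by
    have h1 : |(m:ℝ)| < 1 := by
      have ha' := abs_le.mp hau
      have hb' := abs_le.mp hb
      have hc' := abs_le.mp hc
      have hd' := abs_le.mp hd
      rw [abs_lt]
      constructor <;> nlinarith
    rw [abs_lt] at h1
    have l1 : (-1:ℤ) < m := by exact_mod_cast h1.1
    have l2 : m < 1 := by exact_mod_cast h1.2
    omega
  subst hm
  -- now a = -(b+c+d)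
  have ha3 : |a| ≤ 3 * (Real.sqrt 2 * (M ^ (σ + 2))⁻¹) := by
    have he : a = -(b + c + d) := by push_cast at h; linarith
    rw [he, abs_neg]
    calc |b + c + d| ≤ |b + c| + |d| := abs_add_le _ _
      _ ≤ |b| + |c| + |d| := by linarith [abs_add_le b c]
      _ ≤ _ := by linarith
  have hpi := Real.pi_gt_three
  have hPinv : (0:ℝ) < (M ^ σ)⁻¹ := by positivity
  have hkey : 2 / (Real.pi * M) * (M ^ σ)⁻¹ ≤ 3 * (Real.sqrt 2 * ((M ^ σ)⁻¹ * (M ^ 2)⁻¹)) := by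
    rw [← hpow]; linarith
  have hkey2 : 2 / (Real.pi * M) ≤ 3 * Real.sqrt 2 * (M ^ 2)⁻¹ := by
    have h' : (2 / (Real.pi * M)) * (M ^ σ)⁻¹ ≤ (3 * Real.sqrt 2 * (M ^ 2)⁻¹) * (M ^ σ)⁻¹ := by
      have he : (3 * Real.sqrt 2 * (M ^ 2)⁻¹) * (M ^ σ)⁻¹
          = 3 * (Real.sqrt 2 * ((M ^ σ)⁻¹ * (M ^ 2)⁻¹)) := by ring
      rw [he]; exact hkey
    exact le_of_mul_le_mul_right h' hPinv
  have hπM : (0:ℝ) < Real.pi * M := by positivity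
  rw [div_le_iff₀ hπM] at hkey2
  -- hkey2 : 2 ≤ 3 * √2 * (M^2)⁻¹ * (π * M)
  have hMM : 2 * M ^ 2 ≤ 3 * Real.sqrt 2 * (Real.pi * M) := by
    have := mul_le_mul_of_nonneg_right hkey2 (by positivity : (0:ℝ) ≤ M ^ 2)
    have he : 3 * Real.sqrt 2 * (M ^ 2)⁻¹ * (Real.pi * M) * M ^ 2
        = 3 * Real.sqrt 2 * (Real.pi * M) * ((M ^ 2)⁻¹ * M ^ 2) := by ring
    rw [he, inv_mul_cancel₀ (by positivity : (M:ℝ) ^ 2 ≠ 0), mul_one] at this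
    linarith
  rw [div_lt_iff₀ hs2'] at hM
  -- hM : 3 * π < M * √2
  nlinarith [mul_lt_mul_of_pos_right hM (by positivity : (0:ℝ) < Real.sqrt 2 * M),
    Real.sq_sqrt (by norm_num : (2:ℝ) ≥ 0)]

/-- Multislice momentum conservation: if four fields of scales `i_j` carry sector indices
`s_j ≤ i_j` and fractional momenta `q_j` in the corresponding sector supports, and
`q₁ + q₂ + q₃ + q₄` is an even integer, then either the two smallest of the `s_j`
differ by at most one unit, or the minimum of the `s_j` is attained at a unique index
`j₀` with `s_{j₀} = i_{j₀}` and `i_{j₀} < i_k` for all `k ≠ j₀`. -/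
theorem multislice_momentum_conservation (M : ℝ) (hM : 3 * Real.pi / Real.sqrt 2 < M)
    (i : Fin 4 → ℕ) (hi : ∀ j, 1 ≤ i j) (s : Fin 4 → ℕ) (hs : ∀ j, s j ≤ i j)
    (q : Fin 4 → ℝ) (hsupp : ∀ j, InSectorSupport M (i j) (s j) (q j))
    (m : ℤ) (hsum : q 0 + q 1 + q 2 + q 3 = 2 * m) :
    (∃ j k : Fin 4, j ≠ k ∧
      s j ≤ Finset.univ.inf' Finset.univ_nonempty s + 1 ∧
      s k ≤ Finset.univ.inf' Finset.univ_nonempty s + 1) ∨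
    (∃ j0 : Fin 4, s j0 = i j0 ∧ ∀ k, k ≠ j0 → s j0 < s k ∧ i j0 < i k) := by
  have hM6 := msc_M_big M hM
  have hM1 : (1:ℝ) ≤ M := by linarith
  set σ := Finset.univ.inf' Finset.univ_nonempty s with hσ
  by_cases hL : ∃ j k : Fin 4, j ≠ k ∧ s j ≤ σ + 1 ∧ s k ≤ σ + 1
  · exact Or.inl hL
  push_neg at hL
  obtain ⟨j0, -, hj0⟩ := Finset.exists_mem_eq_inf' (Finset.univ_nonempty) s
  -- hj0 : σ = s j0
  have hbig : ∀ k, k ≠ j0 → σ + 2 ≤ s k := by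
    intro k hk
    have := hL j0 k (Ne.symm hk) (by omega)
    omega
  right
  have hsj0 : s j0 = i j0 := by
    by_contra hne
    have hlt : s j0 < i j0 := lt_of_le_of_ne (hs j0) hne
    have hal : 2 / (Real.pi * M) * (M ^ σ)⁻¹ ≤ |q j0| := by
      rw [hσ, hj0]; exact msc_lower M hlt (hsupp j0)
    have hau : |q j0| ≤ Real.sqrt 2 := by
      calc |q j0| ≤ Real.sqrt 2 * (M ^ s j0)⁻¹ := msc_upper M hM1 (hsupp j0)
        _ ≤ Real.sqrt 2 * 1 := by
            have : (M ^ s j0)⁻¹ ≤ 1 := by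
              rw [inv_le_one_iff₀]; right; exact one_le_pow₀ hM1
            have := Real.sqrt_nonneg 2
            nlinarith
        _ = Real.sqrt 2 := mul_one _
    have hother : ∀ k, k ≠ j0 → |q k| ≤ Real.sqrt 2 * (M ^ (σ + 2))⁻¹ := by
      intro k hk
      calc |q k| ≤ Real.sqrt 2 * (M ^ s k)⁻¹ := msc_upper M hM1 (hsupp k)
        _ ≤ Real.sqrt 2 * (M ^ (σ + 2))⁻¹ := by
            have hp : (M:ℝ) ^ (σ + 2) ≤ M ^ s k := pow_le_pow_right₀ hM1 (hbig k hk)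
            have h1 : (0:ℝ) < M ^ (σ + 2) := by positivity
            have := inv_anti₀ h1 hp
            have := Real.sqrt_nonneg 2
            nlinarith
    fin_cases j0
    · exact msc_key M hM σ (q 0) (q 1) (q 2) (q 3) hal hau
        (hother 1 (by decide)) (hother 2 (by decide)) (hother 3 (by decide)) m
        (by linarith)
    · exact msc_key M hM σ (q 1) (q 0) (q 2) (q 3) hal hau
        (hother 0 (by decide)) (hother 2 (by decide)) (hother 3 (by decide)) m
        (by linarith)
    · exact msc_key M hM σ (q 2) (q 0) (q 1) (q 3) hal hau
        (hother 0 (by decide)) (hother 1 (by decide)) (hother 3 (by decide)) m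
        (by linarith)
    · exact msc_key M hM σ (q 3) (q 0) (q 1) (q 2) hal hau
        (hother 0 (by decide)) (hother 1 (by decide)) (hother 2 (by decide)) m
        (by linarith)
  refine ⟨j0, hsj0, fun k hk => ?_⟩
  have h1 := hbig k hk
  have h2 := hs k
  omega
end
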